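/- arXiv:2203.15067 — 7 statements merged into one kernel-verified Lean document; each statement's English description precedes it below -/
import Mathlib

section
/- A flat Lie algebra (in the sense of Milnor) is unimodular: for every x in g, the trace of ad_x is zero. -/
/-!
Write `R_y z = ∇_z y`. The Koszul formula makes every `∇_x` skew-adjoint and `∇` torsion free,
so `ad x = ∇_x - R_x` and `tr (ad x) = -tr R_x`. Taking traces in the flatness identity
`R_y ∘ ad x = ∇_x ∘ R_y - R_{∇_x y}` gives `tr R_{∇_x y} = tr (R_y R_x)`. If `H` represents
`w ↦ tr (ad w)` through the metric, then `⟪R_H x, y⟫ = -⟪H, ∇_x y⟫ = tr (R_y R_x)`, so `R_H` is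
self-adjoint with `tr (R_H²) = ⟪∇_H H, H⟫ = 0`. Hence `R_H = 0` and
`⟪H, H⟫ = tr (ad H) = -tr R_H = 0`.
-/

open LinearMap (BilinForm trace)

namespace LinearMap.BilinForm

variable {V : Type*} [AddCommGroup V] [Module ℝ V] {B : BilinForm ℝ V}

theorem apply_self_nonneg_of_pos (hpos : ∀ x, x ≠ 0 → 0 < B x x) (x : V) : 0 ≤ B x x := by
  rcases eq_or_ne x 0 with rfl | hx
  · simp
  · exact (hpos x hx).le

theorem nondegenerate_of_pos (hpos : ∀ x, x ≠ 0 → 0 < B x x) : B.Nondegenerate := by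
  refine ⟨fun x hx => ?_, fun y hy => ?_⟩ <;> by_contra hne
  · exact (hpos x hne).ne' (hx x)
  · exact (hpos y hne).ne' (hy y)

variable [Module.Finite ℝ V]

theorem exists_basis_trace_eq_sum (hsymm : ∀ x y, B x y = B y x)
    (hpos : ∀ x, x ≠ 0 → 0 < B x x) :
    ∃ e : Module.Basis (Fin (Module.finrank ℝ V)) ℝ V,
      ∀ f : Module.End ℝ V, trace ℝ V f = ∑ i, B (e i) (f (e i)) := by
  let core : InnerProductSpace.Core ℝ V :=
    { inner x y := B x y
      conj_inner_symm x y := hsymm y x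
      re_inner_nonneg := apply_self_nonneg_of_pos hpos
      add_left x y z := by simp
      smul_left x y r := by simp
      definite x hx := by
        by_contra h
        exact (hpos x h).ne' hx }
  let _ := core.toNormedAddCommGroup
  let _ := InnerProductSpace.ofCore core.toCore
  let b := stdOrthonormalBasis ℝ V
  exact ⟨b.toBasis, fun f => by
    rw [LinearMap.trace_eq_sum_inner f b]; simp only [OrthonormalBasis.coe_toBasis]; rfl⟩

theorem trace_eq_zero_of_isSkewAdjoint (hsymm : ∀ x y, B x y = B y x)
    (hpos : ∀ x, x ≠ 0 → 0 < B x x) {f : Module.End ℝ V} (hf : B.IsSkewAdjoint f) :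
    trace ℝ V f = 0 := by
  obtain ⟨e, he⟩ := exists_basis_trace_eq_sum hsymm hpos
  rw [he]
  refine Finset.sum_eq_zero fun i _ => ?_
  have := hf (e i) (e i)
  rw [Pi.neg_apply, map_neg, hsymm] at this
  linarith

theorem eq_zero_of_isSelfAdjoint_of_trace_mul_self (hsymm : ∀ x y, B x y = B y x)
    (hpos : ∀ x, x ≠ 0 → 0 < B x x) {f : Module.End ℝ V} (hf : LinearMap.IsSelfAdjoint B f)
    (htr : trace ℝ V (f * f) = 0) : f = 0 := by
  obtain ⟨e, he⟩ := exists_basis_trace_eq_sum hsymm hpos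
  have hsum : ∑ i, B (f (e i)) (f (e i)) = 0 := by
    rw [← htr, he]
    exact Finset.sum_congr rfl fun i _ => hf (e i) (f (e i))
  have hsq : ∀ i, B (f (e i)) (f (e i)) = 0 := congrFun <|
    (Fintype.sum_eq_zero_iff_of_nonneg fun i => apply_self_nonneg_of_pos hpos (f (e i))).mp hsum
  refine e.ext fun i => ?_
  by_contra h
  exact (hpos _ h).ne' (hsq i)

end LinearMap.BilinForm

namespace LieAlgebra

variable {L : Type*} [LieRing L] [LieAlgebra ℝ L]

def IsLeviCivitaProduct (B : L →ₗ[ℝ] L →ₗ[ℝ] ℝ) (nabla : L →ₗ[ℝ] L →ₗ[ℝ] L) : Prop :=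
  ∀ x y z : L, 2 * B (nabla x y) z = B ⁅x, y⁆ z + B ⁅z, x⁆ y + B ⁅z, y⁆ x

namespace IsLeviCivitaProduct

variable {B : L →ₗ[ℝ] L →ₗ[ℝ] ℝ} {nabla : L →ₗ[ℝ] L →ₗ[ℝ] L}

theorem isSkewAdjoint (hsymm : ∀ x y, B x y = B y x) (h : IsLeviCivitaProduct B nabla)
    (x : L) : B.IsSkewAdjoint (nabla x) := by
  intro y z
  have hxy := h x y z
  have hxz := h x z y
  rw [← lie_skew y x, ← lie_skew y z, ← lie_skew x z] at hxz
  simp only [map_neg, LinearMap.neg_apply] at hxz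
  rw [Pi.neg_apply, map_neg, hsymm y]
  linarith

theorem sub_swap_eq_lie (hpos : ∀ x, x ≠ 0 → 0 < B x x) (h : IsLeviCivitaProduct B nabla)
    (x y : L) : nabla x y - nabla y x = ⁅x, y⁆ := by
  have hB : ∀ z, B (nabla x y - nabla y x - ⁅x, y⁆) z = 0 := fun z => by
    have hxy := h x y z
    have hyx := h y x z
    rw [← lie_skew y x, map_neg, LinearMap.neg_apply] at hyx
    simp only [map_sub, LinearMap.sub_apply]
    linarith
  exact sub_eq_zero.mp ((BilinForm.nondegenerate_of_pos hpos).1 _ hB)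

theorem ad_eq (hpos : ∀ x, x ≠ 0 → 0 < B x x) (h : IsLeviCivitaProduct B nabla) (x : L) :
    (ad ℝ L x : Module.End ℝ L) = nabla x - nabla.flip x := by
  ext y
  exact (h.sub_swap_eq_lie hpos x y).symm

theorem trace_flip_nabla_eq_trace_mul (hpos : ∀ x, x ≠ 0 → 0 < B x x)
    (h : IsLeviCivitaProduct B nabla)
    (hflat : ∀ x y z, nabla ⁅x, y⁆ z = nabla x (nabla y z) - nabla y (nabla x z)) (x y : L) :
    trace ℝ L (nabla.flip (nabla x y)) =
      trace ℝ L (nabla.flip y * nabla.flip x) := by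
  have hflat' : nabla.flip y * ad ℝ L x = nabla x * nabla.flip y - nabla.flip (nabla x y) := by
    ext z
    exact hflat x z y
  rw [h.ad_eq hpos, mul_sub] at hflat'
  have := congrArg (trace ℝ L) hflat'
  rw [map_sub, map_sub, LinearMap.trace_mul_comm ℝ (nabla.flip y)] at this
  linarith

variable [Module.Finite ℝ L]

theorem trace_ad_eq_neg_trace_flip (hsymm : ∀ x y, B x y = B y x)
    (hpos : ∀ x, x ≠ 0 → 0 < B x x) (h : IsLeviCivitaProduct B nabla) (x : L) :
    trace ℝ L (ad ℝ L x) = -trace ℝ L (nabla.flip x) := by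
  rw [h.ad_eq hpos, map_sub,
    BilinForm.trace_eq_zero_of_isSkewAdjoint hsymm hpos (h.isSkewAdjoint hsymm x), zero_sub]

theorem eq_zero_of_forall_bilin_eq_trace_ad (hsymm : ∀ x y, B x y = B y x)
    (hpos : ∀ x, x ≠ 0 → 0 < B x x) (h : IsLeviCivitaProduct B nabla)
    (hflat : ∀ x y z, nabla ⁅x, y⁆ z = nabla x (nabla y z) - nabla y (nabla x z)) {H : L}
    (hH : ∀ w, B H w = trace ℝ L (ad ℝ L w)) : H = 0 := by
  have hR : ∀ x y, B (nabla x H) y = trace ℝ L (nabla.flip y * nabla.flip x) :=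
    fun x y => by
      rw [h.isSkewAdjoint hsymm x H y, Pi.neg_apply, map_neg, hH,
        h.trace_ad_eq_neg_trace_flip hsymm hpos, neg_neg,
        h.trace_flip_nabla_eq_trace_mul hpos hflat]
  have hself : LinearMap.IsSelfAdjoint B (nabla.flip H) := fun x y => by
    rw [LinearMap.flip_apply, LinearMap.flip_apply, hsymm x, hR, hR,
      LinearMap.trace_mul_comm]
  have hsq : trace ℝ L (nabla.flip H * nabla.flip H) = 0 := by
    have hskew := h.isSkewAdjoint hsymm H H H
    rw [Pi.neg_apply, map_neg, hsymm H] at hskew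
    linarith [hR H H]
  have hflipH := BilinForm.eq_zero_of_isSelfAdjoint_of_trace_mul_self hsymm hpos hself hsq
  by_contra hne
  refine (hpos H hne).ne' ?_
  rw [hH, h.trace_ad_eq_neg_trace_flip hsymm hpos, hflipH, map_zero, neg_zero]

end IsLeviCivitaProduct

end LieAlgebra

/-- A flat Lie algebra (finite-dimensional real Lie algebra with a
positive-definite inner product whose Levi-Civita product, given by the Koszul formula,
has vanishing curvature) is unimodular: `tr (ad x) = 0` for every `x`. -/
theorem stmt_5 {L : Type*} [LieRing L] [LieAlgebra ℝ L] [Module.Finite ℝ L]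
    (B : L →ₗ[ℝ] L →ₗ[ℝ] ℝ)
    (hsymm : ∀ x y : L, B x y = B y x)
    (hpos : ∀ x : L, x ≠ 0 → 0 < B x x)
    (nabla : L →ₗ[ℝ] L →ₗ[ℝ] L)
    (hKoszul : ∀ x y z : L,
      2 * B (nabla x y) z = B ⁅x, y⁆ z + B ⁅z, x⁆ y + B ⁅z, y⁆ x)
    (hflat : ∀ x y z : L, nabla ⁅x, y⁆ z = nabla x (nabla y z) - nabla y (nabla x z)) :
    ∀ x : L, LinearMap.trace ℝ L (LieAlgebra.ad ℝ L x) = 0 := by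
  obtain ⟨H, hH⟩ := (BilinForm.toDual B (BilinForm.nondegenerate_of_pos hpos)).surjective
    (trace ℝ L ∘ₗ (LieAlgebra.ad ℝ L : L →ₗ[ℝ] Module.End ℝ L))
  have hHw : ∀ w, B H w = trace ℝ L (LieAlgebra.ad ℝ L w) := fun w =>
    LinearMap.congr_fun hH w
  have hH0 := LieAlgebra.IsLeviCivitaProduct.eq_zero_of_forall_bilin_eq_trace_ad hsymm hpos
    hKoszul hflat hHw
  intro x
  rw [← hHw, hH0, map_zero, LinearMap.zero_apply]
end

section
/- Let g be the 3-dimensional real Lie algebra with basis {s, d₁, d₂} and brackets [s,d₁] = d₂, [s,d₂] = −d₁, [d₁,d₂] = 0. For the bivector r = a·s∧d₁ + b·s∧d₂ + c·d₁∧d₂, the Schouten bracket satisfies [r,r] = 2(a² + b²)·s∧d₁∧d₂. In particular [r,r] is ad-invariant for all a, b, c. -/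
/-!
By bilinearity `[r, r]` is a combination of brackets of the basis bivectors. On a decomposable
bivector `[x ∧ y, x ∧ y] = 2 [x, y] ∧ x ∧ y`, which is `2 s ∧ d₁ ∧ d₂` for `s ∧ d₁` and `s ∧ d₂`
and `0` for `d₁ ∧ d₂`, while every mixed bracket is a sum of trivectors with a repeated factor.
On the top power `Λ³g` the derivation `ad x` acts by the scalar `tr (ad x)`, and `g` is
unimodular, so `s ∧ d₁ ∧ d₂` (hence `[r, r]`) is ad-invariant.
-/

open ExteriorAlgebra

namespace ExteriorAlgebra

variable {R M : Type*} [CommRing R] [AddCommGroup M] [Module R M]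

theorem ι_mul_ι_anticomm (x y : M) : ι R x * ι R y = -(ι R y * ι R x) :=
  eq_neg_of_add_eq_zero_left (ι_add_mul_swap x y)

theorem mul_ι_mul_ι_anticomm (a : ExteriorAlgebra R M) (x y : M) :
    a * ι R x * ι R y = -(a * ι R y * ι R x) := by
  rw [mul_assoc, mul_assoc, ← mul_neg, ι_mul_ι_anticomm x y]

theorem ι_mul_ι_mul_ι_self (x y : M) : ι R x * ι R y * ι R y = 0 := by
  rw [mul_assoc, ι_sq_zero, mul_zero]

theorem ι_mul_ι_mul_ι_self_left (x y : M) : ι R x * ι R y * ι R x = 0 := by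
  rw [mul_ι_mul_ι_anticomm, ι_sq_zero, zero_mul, neg_zero]

theorem ι_mul_ι_mul_ι_rotate (x y z : M) : ι R x * ι R y * ι R z = ι R y * ι R z * ι R x := by
  rw [ι_mul_ι_anticomm x y, neg_mul, mul_assoc, ι_mul_ι_anticomm x z, mul_neg, neg_neg, mul_assoc]

end ExteriorAlgebra

section Schouten

variable {R L : Type*} [CommRing R] [LieRing L] [LieAlgebra R L]

def IsSchoutenBracketOnBivectors
    (S : ExteriorAlgebra R L →ₗ[R] ExteriorAlgebra R L →ₗ[R] ExteriorAlgebra R L) : Prop :=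
  ∀ x1 x2 y1 y2 : L, S (ι R x1 * ι R x2) (ι R y1 * ι R y2) =
    ι R ⁅x1, y1⁆ * ι R x2 * ι R y2 - ι R ⁅x1, y2⁆ * ι R x2 * ι R y1
      - ι R ⁅x2, y1⁆ * ι R x1 * ι R y2 + ι R ⁅x2, y2⁆ * ι R x1 * ι R y1

def IsAdDerivationOnTrivectors
    (A : L →ₗ[R] ExteriorAlgebra R L →ₗ[R] ExteriorAlgebra R L) : Prop :=
  ∀ x u v w : L, A x (ι R u * ι R v * ι R w) =
    ι R ⁅x, u⁆ * ι R v * ι R w + ι R u * ι R ⁅x, v⁆ * ι R w + ι R u * ι R v * ι R ⁅x, w⁆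

theorem IsSchoutenBracketOnBivectors.apply_self
    {S : ExteriorAlgebra R L →ₗ[R] ExteriorAlgebra R L →ₗ[R] ExteriorAlgebra R L}
    (hS : IsSchoutenBracketOnBivectors S) (x y : L) :
    S (ι R x * ι R y) (ι R x * ι R y) = (2 : R) • (ι R ⁅x, y⁆ * ι R x * ι R y) := by
  rw [hS, lie_self, lie_self, ← lie_skew y x, mul_ι_mul_ι_anticomm _ y x]
  simp only [map_zero, map_neg, zero_mul, neg_mul]
  module

end Schouten

section EuclideanPlane

-- `s` generates rotations and `d1`, `d2` translations: these are the brackets of `𝔢(2)`.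

variable {R L : Type*} [CommRing R] [LieRing L] [LieAlgebra R L] {s d1 d2 : L}

theorem euclideanPlane_schouten_self
    (h1 : ⁅s, d1⁆ = d2) (h2 : ⁅s, d2⁆ = -d1) (h3 : ⁅d1, d2⁆ = 0)
    {S : ExteriorAlgebra R L →ₗ[R] ExteriorAlgebra R L →ₗ[R] ExteriorAlgebra R L}
    (hS : IsSchoutenBracketOnBivectors S) (a c e : R) :
    S (a • (ι R s * ι R d1) + c • (ι R s * ι R d2) + e • (ι R d1 * ι R d2))
        (a • (ι R s * ι R d1) + c • (ι R s * ι R d2) + e • (ι R d1 * ι R d2)) =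
      (2 * (a ^ 2 + c ^ 2)) • (ι R s * ι R d1 * ι R d2) := by
  have h1' : ⁅d1, s⁆ = -d2 := by rw [← lie_skew, h1]
  have h2' : ⁅d2, s⁆ = d1 := by rw [← lie_skew, h2, neg_neg]
  have h3' : ⁅d2, d1⁆ = 0 := by rw [← lie_skew, h3, neg_zero]
  have hX : S (ι R s * ι R d1) (ι R s * ι R d1) = (2 : R) • (ι R s * ι R d1 * ι R d2) := by
    rw [hS.apply_self, h1, ι_mul_ι_mul_ι_rotate]
  have hY : S (ι R s * ι R d2) (ι R s * ι R d2) = (2 : R) • (ι R s * ι R d1 * ι R d2) := by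
    rw [hS.apply_self, h2, map_neg, neg_mul, neg_mul, ι_mul_ι_anticomm d1 s, neg_mul, neg_neg]
  have hZ : S (ι R d1 * ι R d2) (ι R d1 * ι R d2) = 0 := by
    rw [hS.apply_self, h3, map_zero, zero_mul, zero_mul, smul_zero]
  -- every summand of a mixed bracket is a trivector with a repeated factor
  obtain ⟨hXY, hYX, hXZ, hZX, hYZ, hZY⟩ :
      S (ι R s * ι R d1) (ι R s * ι R d2) = 0 ∧ S (ι R s * ι R d2) (ι R s * ι R d1) = 0 ∧
      S (ι R s * ι R d1) (ι R d1 * ι R d2) = 0 ∧ S (ι R d1 * ι R d2) (ι R s * ι R d1) = 0 ∧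
      S (ι R s * ι R d2) (ι R d1 * ι R d2) = 0 ∧ S (ι R d1 * ι R d2) (ι R s * ι R d2) = 0 := by
    refine ⟨?_, ?_, ?_, ?_, ?_, ?_⟩ <;>
      simp only [hS _ _ _ _, h1, h2, h3, h1', h2', h3', lie_self, map_zero, map_neg, zero_mul,
        neg_mul, ι_sq_zero, ι_mul_ι_mul_ι_self_left, neg_zero, sub_zero, add_zero]
  simp only [map_add, map_smul, LinearMap.add_apply, LinearMap.smul_apply, hX, hY, hZ, hXY, hYX,
    hXZ, hZX, hYZ, hZY]
  module

theorem euclideanPlane_ad_volume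
    (h1 : ⁅s, d1⁆ = d2) (h2 : ⁅s, d2⁆ = -d1) (h3 : ⁅d1, d2⁆ = 0)
    {A : L →ₗ[R] ExteriorAlgebra R L →ₗ[R] ExteriorAlgebra R L}
    (hA : IsAdDerivationOnTrivectors A) (b : Module.Basis (Fin 3) R L)
    (hb0 : b 0 = s) (hb1 : b 1 = d1) (hb2 : b 2 = d2) (x : L) :
    A x (ι R s * ι R d1 * ι R d2) = 0 := by
  have h1' : ⁅d1, s⁆ = -d2 := by rw [← lie_skew, h1]
  have h2' : ⁅d2, s⁆ = d1 := by rw [← lie_skew, h2, neg_neg]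
  have h3' : ⁅d2, d1⁆ = 0 := by rw [← lie_skew, h3, neg_zero]
  suffices A.flip (ι R s * ι R d1 * ι R d2) = 0 from LinearMap.congr_fun this x
  refine b.ext fun i => ?_
  fin_cases i <;>
    simp [hb0, hb1, hb2, hA _ _ _ _, h1, h2, h3, h1', h2', h3', ι_mul_ι_mul_ι_self,
      ι_mul_ι_mul_ι_self_left]

end EuclideanPlane

/-- For the 3-dimensional Lie algebra with basis `{s, d₁, d₂}` and brackets
`[s,d₁] = d₂`, `[s,d₂] = −d₁`, `[d₁,d₂] = 0`, and the bivector
`r = a·s∧d₁ + b·s∧d₂ + c·d₁∧d₂`, the algebraic Schouten bracket satisfies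
`[r,r] = 2(a² + b²)·s∧d₁∧d₂`, and `[r,r]` is ad-invariant for all `a, b, c`. -/
theorem stmt_6 {L : Type*} [LieRing L] [LieAlgebra ℝ L]
    (s d1 d2 : L) (b : Module.Basis (Fin 3) ℝ L)
    (hb0 : b 0 = s) (hb1 : b 1 = d1) (hb2 : b 2 = d2)
    (h1 : ⁅s, d1⁆ = d2) (h2 : ⁅s, d2⁆ = -d1) (h3 : ⁅d1, d2⁆ = 0)
    -- the algebraic Schouten bracket on bivectors
    (S : ExteriorAlgebra ℝ L →ₗ[ℝ] ExteriorAlgebra ℝ L →ₗ[ℝ] ExteriorAlgebra ℝ L)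
    (hS : ∀ x1 x2 y1 y2 : L, S (ι ℝ x1 * ι ℝ x2) (ι ℝ y1 * ι ℝ y2) =
      ι ℝ ⁅x1, y1⁆ * ι ℝ x2 * ι ℝ y2 - ι ℝ ⁅x1, y2⁆ * ι ℝ x2 * ι ℝ y1
        - ι ℝ ⁅x2, y1⁆ * ι ℝ x1 * ι ℝ y2 + ι ℝ ⁅x2, y2⁆ * ι ℝ x1 * ι ℝ y1)
    -- the derivation extension of `ad` to trivectors
    (A3 : L →ₗ[ℝ] ExteriorAlgebra ℝ L →ₗ[ℝ] ExteriorAlgebra ℝ L)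
    (hA3 : ∀ x u v w : L, A3 x (ι ℝ u * ι ℝ v * ι ℝ w) =
      ι ℝ ⁅x, u⁆ * ι ℝ v * ι ℝ w + ι ℝ u * ι ℝ ⁅x, v⁆ * ι ℝ w
        + ι ℝ u * ι ℝ v * ι ℝ ⁅x, w⁆)
    (a c e : ℝ) (r : ExteriorAlgebra ℝ L)
    (hr : r = a • (ι ℝ s * ι ℝ d1) + c • (ι ℝ s * ι ℝ d2) + e • (ι ℝ d1 * ι ℝ d2)) :
    S r r = (2 * (a ^ 2 + c ^ 2)) • (ι ℝ s * ι ℝ d1 * ι ℝ d2) ∧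
      ∀ x : L, A3 x (S r r) = 0 := by
  subst hr
  have hrr := euclideanPlane_schouten_self h1 h2 h3 hS a c e
  refine ⟨hrr, fun x => ?_⟩
  rw [hrr, map_smul, euclideanPlane_ad_volume h1 h2 h3 hA3 b hb0 hb1 hb2 x, smul_zero]
end

section
/- Let g be the 4-dimensional Lie algebra with basis {s, z, d₁, d₂} and nonzero brackets [s,d₁]=d₂, [s,d₂]=−d₁ (z central). The bivector r = z∧d₁ satisfies the classical Yang-Baxter equation [r,r] = 0, but the associated coboundary ξ(x) = ad_x r fails the metaflatness condition: ad_s² ξ(s) = −z∧d₂ ≠ 0. -/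
/-!
Since `z` is central, `r = z ∧ d₁` lives on the abelian subalgebra spanned by `z` and `d₁`, so
every term of `[r, r]` contains a vanishing bracket. The derivation `ad_s` kills `z` and rotates
`d₁ ↦ d₂ ↦ -d₁`, whence `ad_s³ r = -z ∧ d₂`. Finally `z ∧ d₂ ≠ 0`, as the pairing with the wedge
of the coordinate forms of `z` and `d₂` is the determinant `1`.
-/

open ExteriorAlgebra

section Bivectors

variable {R L : Type*} [CommRing R] [LieRing L] [LieAlgebra R L]

def IsAdDerivationOnBivectors
    (A : L →ₗ[R] ExteriorAlgebra R L →ₗ[R] ExteriorAlgebra R L) : Prop :=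
  ∀ x u v : L, A x (ι R u * ι R v) = ι R ⁅x, u⁆ * ι R v + ι R u * ι R ⁅x, v⁆

theorem IsSchoutenBracketOnBivectors.apply_self_eq_zero
    {S : ExteriorAlgebra R L →ₗ[R] ExteriorAlgebra R L →ₗ[R] ExteriorAlgebra R L}
    (hS : IsSchoutenBracketOnBivectors S) {x y : L} (hxy : ⁅x, y⁆ = 0) :
    S (ι R x * ι R y) (ι R x * ι R y) = 0 := by
  rw [hS, lie_self, lie_self, hxy, ← lie_skew, hxy]
  simp

theorem IsAdDerivationOnBivectors.apply_of_lie_eq_zero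
    {A : L →ₗ[R] ExteriorAlgebra R L →ₗ[R] ExteriorAlgebra R L}
    (hA : IsAdDerivationOnBivectors A) {x u : L} (hxu : ⁅x, u⁆ = 0) (v : L) :
    A x (ι R u * ι R v) = ι R u * ι R ⁅x, v⁆ := by
  rw [hA, hxu, map_zero, zero_mul, zero_add]

end Bivectors

theorem ExteriorAlgebra.ι_mul_ι_ne_zero {R M : Type*} [CommRing R] [AddCommGroup M]
    [Module R M] (f g : Module.Dual R M) {u v : M} (h : f u * g v - g u * f v ≠ 0) :
    ι R u * ι R v ≠ 0 := by
  intro huv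
  have hwedge : exteriorPower.ιMulti R 2 ![u, v] = 0 :=
    Subtype.ext (by simpa [ExteriorAlgebra.ιMulti_apply] using huv)
  apply h
  simpa [Matrix.det_fin_two] using
    congrArg (exteriorPower.pairingDual R M 2 (exteriorPower.ιMulti R 2 ![f, g])) hwedge

theorem stmt_8_general {L : Type*} [LieRing L] [LieAlgebra ℝ L]
    (s z d1 d2 : L) (b : Module.Basis (Fin 4) ℝ L)
    (hb1 : b 1 = z) (hb3 : b 3 = d2)
    (h1 : ⁅s, d1⁆ = d2) (h2 : ⁅s, d2⁆ = -d1)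
    (hz : ∀ y : L, ⁅z, y⁆ = 0)
    -- the algebraic Schouten bracket on bivectors
    (S : ExteriorAlgebra ℝ L →ₗ[ℝ] ExteriorAlgebra ℝ L →ₗ[ℝ] ExteriorAlgebra ℝ L)
    (hS : ∀ x1 x2 y1 y2 : L, S (ι ℝ x1 * ι ℝ x2) (ι ℝ y1 * ι ℝ y2) =
      ι ℝ ⁅x1, y1⁆ * ι ℝ x2 * ι ℝ y2 - ι ℝ ⁅x1, y2⁆ * ι ℝ x2 * ι ℝ y1
        - ι ℝ ⁅x2, y1⁆ * ι ℝ x1 * ι ℝ y2 + ι ℝ ⁅x2, y2⁆ * ι ℝ x1 * ι ℝ y1)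
    -- the derivation extension of `ad` to bivectors
    (A : L →ₗ[ℝ] ExteriorAlgebra ℝ L →ₗ[ℝ] ExteriorAlgebra ℝ L)
    (hA : ∀ x u v : L, A x (ι ℝ u * ι ℝ v) = ι ℝ ⁅x, u⁆ * ι ℝ v + ι ℝ u * ι ℝ ⁅x, v⁆)
    (r : ExteriorAlgebra ℝ L) (hr : r = ι ℝ z * ι ℝ d1) :
    S r r = 0 ∧ A s (A s (A s r)) = -(ι ℝ z * ι ℝ d2) ∧ ι ℝ z * ι ℝ d2 ≠ 0 := by
  have hA : IsAdDerivationOnBivectors A := hA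
  have hsz : ⁅s, z⁆ = 0 := by rw [← lie_skew, hz, neg_zero]
  have hs_zd1 : A s (ι ℝ z * ι ℝ d1) = ι ℝ z * ι ℝ d2 := by
    rw [hA.apply_of_lie_eq_zero hsz, h1]
  have hs_zd2 : A s (ι ℝ z * ι ℝ d2) = -(ι ℝ z * ι ℝ d1) := by
    rw [hA.apply_of_lie_eq_zero hsz, h2, map_neg, mul_neg]
  subst hr
  refine ⟨IsSchoutenBracketOnBivectors.apply_self_eq_zero hS (hz d1), ?_,
    ι_mul_ι_ne_zero (b.coord 1) (b.coord 3) ?_⟩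
  · rw [hs_zd1, hs_zd2, map_neg, hs_zd1]
  · simp [← hb1, ← hb3]

/-- For the 4-dimensional Lie algebra with basis `{s, z, d₁, d₂}`, nonzero
brackets `[s,d₁]=d₂`, `[s,d₂]=−d₁` and `z` central, the bivector `r = z∧d₁` satisfies
the classical Yang–Baxter equation `[r,r] = 0`, but the coboundary `ξ(x) = ad_x r`
fails metaflatness: `ad_s² ξ(s) = −z∧d₂ ≠ 0`. -/
theorem stmt_8 {L : Type*} [LieRing L] [LieAlgebra ℝ L]
    (s z d1 d2 : L) (b : Module.Basis (Fin 4) ℝ L)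
    (hb0 : b 0 = s) (hb1 : b 1 = z) (hb2 : b 2 = d1) (hb3 : b 3 = d2)
    (h1 : ⁅s, d1⁆ = d2) (h2 : ⁅s, d2⁆ = -d1) (h3 : ⁅d1, d2⁆ = 0)
    (hz : ∀ y : L, ⁅z, y⁆ = 0)
    -- the algebraic Schouten bracket on bivectors
    (S : ExteriorAlgebra ℝ L →ₗ[ℝ] ExteriorAlgebra ℝ L →ₗ[ℝ] ExteriorAlgebra ℝ L)
    (hS : ∀ x1 x2 y1 y2 : L, S (ι ℝ x1 * ι ℝ x2) (ι ℝ y1 * ι ℝ y2) =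
      ι ℝ ⁅x1, y1⁆ * ι ℝ x2 * ι ℝ y2 - ι ℝ ⁅x1, y2⁆ * ι ℝ x2 * ι ℝ y1
        - ι ℝ ⁅x2, y1⁆ * ι ℝ x1 * ι ℝ y2 + ι ℝ ⁅x2, y2⁆ * ι ℝ x1 * ι ℝ y1)
    -- the derivation extension of `ad` to bivectors
    (A : L →ₗ[ℝ] ExteriorAlgebra ℝ L →ₗ[ℝ] ExteriorAlgebra ℝ L)
    (hA : ∀ x u v : L, A x (ι ℝ u * ι ℝ v) = ι ℝ ⁅x, u⁆ * ι ℝ v + ι ℝ u * ι ℝ ⁅x, v⁆)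
    (r : ExteriorAlgebra ℝ L) (hr : r = ι ℝ z * ι ℝ d1) :
    S r r = 0 ∧ A s (A s (A s r)) = -(ι ℝ z * ι ℝ d2) ∧ ι ℝ z * ι ℝ d2 ≠ 0 :=
  stmt_8_general s z d1 d2 b hb1 hb3 h1 h2 hz S hS A hA r hr
end

section
/- Let g = span{s} ⊕ span{d₁,...,d_{2m}} be a flat Lie algebra with brackets [s,d_{2j−1}] = λ_j d_{2j}, [s,d_{2j}] = −λ_j d_{2j−1} (λ_j ∈ ℝ) and d-span abelian. Then the bivector r = Σ_{i=1}^m μ_i d_{2i−1}∧d_{2i} satisfies [r,r] = 0 and ad_s r = 0; in particular the coboundary ξ(x) = ad_x r vanishes on s, so (g, ξ) is metaflat. -/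
open ExteriorAlgebra

/-- In the flat Lie algebra `g = span{s} ⊕ span{d₁,…,d_{2m}}` with
`[s,d_{2j−1}] = λ_j d_{2j}`, `[s,d_{2j}] = −λ_j d_{2j−1}` and the `d`-span abelian
(here `p j = d_{2j−1}`, `q j = d_{2j}`), the bivector `r = Σ μ_i d_{2i−1}∧d_{2i}`
satisfies `[r,r] = 0` and `ad_s r = 0`; in particular the coboundary `ξ(x) = ad_x r`
vanishes on `s`, so `(g, ξ)` is metaflat. -/
theorem stmt_12 {L : Type*} [LieRing L] [LieAlgebra ℝ L] {m : ℕ}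
    (s : L) (p q : Fin m → L) (lam mu : Fin m → ℝ)
    (hsp : ∀ j, ⁅s, p j⁆ = lam j • q j)
    (hsq : ∀ j, ⁅s, q j⁆ = -(lam j • p j))
    (hpp : ∀ i j, ⁅p i, p j⁆ = 0) (hpq : ∀ i j, ⁅p i, q j⁆ = 0)
    (hqq : ∀ i j, ⁅q i, q j⁆ = 0)
    -- the algebraic Schouten bracket on bivectors
    (S : ExteriorAlgebra ℝ L →ₗ[ℝ] ExteriorAlgebra ℝ L →ₗ[ℝ] ExteriorAlgebra ℝ L)
    (hS : ∀ x1 x2 y1 y2 : L, S (ι ℝ x1 * ι ℝ x2) (ι ℝ y1 * ι ℝ y2) =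
      ι ℝ ⁅x1, y1⁆ * ι ℝ x2 * ι ℝ y2 - ι ℝ ⁅x1, y2⁆ * ι ℝ x2 * ι ℝ y1
        - ι ℝ ⁅x2, y1⁆ * ι ℝ x1 * ι ℝ y2 + ι ℝ ⁅x2, y2⁆ * ι ℝ x1 * ι ℝ y1)
    -- the derivation extension of `ad` to bivectors
    (A : L →ₗ[ℝ] ExteriorAlgebra ℝ L →ₗ[ℝ] ExteriorAlgebra ℝ L)
    (hA : ∀ x u v : L, A x (ι ℝ u * ι ℝ v) = ι ℝ ⁅x, u⁆ * ι ℝ v + ι ℝ u * ι ℝ ⁅x, v⁆)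
    (r : ExteriorAlgebra ℝ L)
    (hr : r = ∑ i : Fin m, mu i • (ι ℝ (p i) * ι ℝ (q i))) :
    S r r = 0 ∧ A s r = 0 ∧
      ∀ x y w : L, x ∈ Submodule.span ℝ {s} → y ∈ Submodule.span ℝ {s} →
        w ∈ Submodule.span ℝ {s} → A x (A y (A w r)) = 0 := by
  subst hr
  have hqp : ∀ i j, ⁅q i, p j⁆ = 0 := fun i j => by
    rw [← lie_skew, hpq, neg_zero]
  have hAs : A s (∑ i : Fin m, mu i • (ι ℝ (p i) * ι ℝ (q i))) = 0 := by
    rw [map_sum]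
    refine Finset.sum_eq_zero fun i _ => ?_
    rw [map_smul, hA, hsp, hsq, map_smul, map_neg, map_smul]
    simp [ι_sq_zero, mul_smul_comm, smul_mul_assoc]
  refine ⟨?_, hAs, ?_⟩
  · simp [map_sum, LinearMap.sum_apply, map_smul, LinearMap.smul_apply,
      hS, hpp, hpq, hqq, hqp]
  · intro x y w hx hy hw
    rw [Submodule.mem_span_singleton] at hx hy hw
    obtain ⟨a, rfl⟩ := hx; obtain ⟨b, rfl⟩ := hy; obtain ⟨c, rfl⟩ := hw
    simp only [map_smul, LinearMap.smul_apply, hAs, smul_zero, map_zero]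
end

section
/- Let A be a commuting family of skew-symmetric endomorphisms of a real inner product space of dimension 2m. Then there exists an orthonormal basis d₁,...,d_{2m} in which every T ∈ A has block-diagonal form with 2×2 blocks ((0, −λ_j(T)), (λ_j(T), 0)) for real numbers λ_j(T). -/
/-!
For skew-symmetric `S, T` that commute, `S * T` is symmetric, so all products of members of the
family commute and are simultaneously diagonalizable. A joint eigenvector `x` of these products
gives an invariant plane: if `T₀ x ≠ 0`, then `T₀ ^ 2` acts on the joint eigenspace of `x` as the
nonzero scalar `-‖T₀ x‖²`, which forces every `T x` onto the line through `T₀ x`, while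
`T (T₀ x)` is a multiple of `x`. If the whole family vanishes, any orthonormal pair will do.
Skew-symmetry makes the orthogonal complement of such a plane invariant, and induction on the
dimension finishes the proof.
-/

open scoped RealInnerProductSpace
open Module Submodule Set

theorem Orthonormal.uncurry_cons {𝕜 E κ : Type*} [RCLike 𝕜] [NormedAddCommGroup E]
    [InnerProductSpace 𝕜 E] {m : ℕ} {p : κ → E} {c : Fin m → κ → E}
    (hp : Orthonormal 𝕜 p) (hc : Orthonormal 𝕜 (Function.uncurry c))
    (hpc : ∀ k j l, inner 𝕜 (p k) (c j l) = 0) :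
    Orthonormal 𝕜 (Function.uncurry (Fin.cons p c : Fin (m + 1) → κ → E)) := by
  classical
  rw [orthonormal_iff_ite] at hp hc ⊢
  rintro ⟨j, k⟩ ⟨j', k'⟩
  cases j using Fin.cases <;> cases j' using Fin.cases
  · simpa using hp k k'
  · simp [hpc, (Fin.succ_ne_zero _).symm]
  · simp [inner_eq_zero_symm.mp (hpc _ _ _), Fin.succ_ne_zero]
  case succ.succ i i' => simpa using hc (i, k) (i', k')

namespace LinearMap

variable {V : Type*} [NormedAddCommGroup V] [InnerProductSpace ℝ V]

def IsSkewSymmetric (T : V →ₗ[ℝ] V) : Prop :=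
  ∀ u v, ⟪T u, v⟫ = -⟪u, T v⟫

namespace IsSkewSymmetric

variable {T S : V →ₗ[ℝ] V}

theorem inner_apply_self (hT : T.IsSkewSymmetric) (u : V) : ⟪u, T u⟫ = 0 := by
  have := hT u u
  rw [real_inner_comm] at this
  linarith

theorem isSymmetric_mul (hT : T.IsSkewSymmetric) (hS : S.IsSkewSymmetric) (h : Commute T S) :
    (T * S).IsSymmetric := fun u v => by
  rw [Module.End.mul_apply, hT, hS, neg_neg, ← Module.End.mul_apply, h.eq, Module.End.mul_apply]

theorem mapsTo_orthogonal (hT : T.IsSkewSymmetric) {K : Submodule ℝ V} (hK : MapsTo T K K) :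
    MapsTo T Kᗮ Kᗮ := fun x hx u hu => by
  rw [← neg_eq_zero, ← hT]
  exact inner_right_of_mem_orthogonal (hK hu) hx

theorem restrict (hT : T.IsSkewSymmetric) {K : Submodule ℝ V} (hK : MapsTo T K K) :
    (T.restrict hK).IsSkewSymmetric :=
  fun u v => hT u v

end IsSkewSymmetric

end LinearMap

section RotationPair

variable {V ι : Type*} [NormedAddCommGroup V] [InnerProductSpace ℝ V] {T : ι → V →ₗ[ℝ] V}

-- In the basis `(e, f)` of their span, each `T i` acts by the block `((0, -c), (c, 0))`.
def IsRotationPair (T : ι → V →ₗ[ℝ] V) (e f : V) : Prop :=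
  ∀ i, ∃ c : ℝ, T i e = c • f ∧ T i f = -(c • e)

theorem IsRotationPair.mapsTo_span {e f : V} (h : IsRotationPair T e f) (i : ι) :
    MapsTo (T i) (span ℝ (range ![e, f])) (span ℝ (range ![e, f])) := by
  obtain ⟨c, he, hf⟩ := h i
  have hle : span ℝ (range ![e, f]) ≤ (span ℝ (range ![e, f])).comap (T i) := by
    refine span_le.mpr (range_subset_iff.mpr (Fin.forall_fin_two.mpr ⟨?_, ?_⟩))
    · show T i e ∈ span ℝ (range ![e, f])
      exact he ▸ smul_mem _ c (subset_span (mem_range_self 1))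
    · show T i f ∈ span ℝ (range ![e, f])
      exact hf ▸ neg_mem (smul_mem _ c (subset_span (mem_range_self 0)))
  exact fun x hx => hle hx

theorem IsRotationPair.of_restrict {K : Submodule ℝ V} {hK : ∀ i, MapsTo (T i) K K} {e f : K}
    (h : IsRotationPair (fun i => (T i).restrict (hK i)) e f) : IsRotationPair T e f :=
  fun i => (h i).imp fun _ hc => ⟨congrArg Subtype.val hc.1, congrArg Subtype.val hc.2⟩

variable (hskew : ∀ i, (T i).IsSkewSymmetric) (hcomm : ∀ i j, Commute (T i) (T j))
include hskew hcomm

theorem exists_orthonormal_isRotationPair_of_apply_apply_eq_smul {x : V} (hx : ‖x‖ = 1)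
    {χ : ι → ι → ℝ} (hχ : ∀ i j, T i (T j x) = χ i j • x) {i₀ : ι} (h₀ : T i₀ x ≠ 0) :
    ∃ f, Orthonormal ℝ ![x, f] ∧ IsRotationPair T x f := by
  set w := T i₀ x
  set μ := χ i₀ i₀
  have hμ : μ = -‖w‖ ^ 2 := by
    have := hskew i₀ w x
    rw [hχ, real_inner_smul_left, real_inner_self_eq_norm_sq, hx,
      real_inner_self_eq_norm_sq] at this
    simpa using this
  have hw : ‖w‖ ≠ 0 := norm_ne_zero_iff.mpr h₀
  have hμ0 : μ ≠ 0 := by rw [hμ]; simpa using hw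
  have hswap : ∀ i j v, T i (T j v) = T j (T i v) := fun i j v =>
    LinearMap.congr_fun (hcomm i j).eq v
  -- `T i₀ ^ 2 = μ ≠ 0` on the joint eigenspace of `x`, which contains `T i x` and `w`.
  have hpar : ∀ i, T i x = (χ i i₀ / μ) • w := by
    intro i
    set y := T i x - (χ i i₀ / μ) • w
    have hy : T i₀ y = 0 := by
      rw [map_sub, map_smul, hswap, hχ, hχ, smul_smul, div_mul_cancel₀ _ hμ0, sub_self]
    have hy2 : T i₀ (T i₀ y) = μ • y := by
      rw [map_sub, map_sub, map_smul, map_smul, hswap i₀ i, hswap i₀ i, hχ, map_smul,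
        map_smul, smul_sub, smul_comm μ]
    rw [hy, map_zero, eq_comm, smul_eq_zero] at hy2
    exact sub_eq_zero.mp (hy2.resolve_left hμ0)
  refine ⟨‖w‖⁻¹ • w, ?_, fun i => ⟨χ i i₀ / μ * ‖w‖, ?_, ?_⟩⟩
  · simp [hx, norm_smul, hw, inner_smul_right, w, (hskew i₀).inner_apply_self x]
  · rw [hpar, smul_smul, mul_assoc, mul_inv_cancel₀ hw, mul_one]
  · rw [map_smul, hχ, smul_smul, hμ, ← neg_smul]
    congr 1
    field_simp

end RotationPair

section Decomposition

variable {V ι : Type*} [NormedAddCommGroup V] [InnerProductSpace ℝ V] [FiniteDimensional ℝ V]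
  {T : ι → V →ₗ[ℝ] V} (hskew : ∀ i, (T i).IsSkewSymmetric) (hcomm : ∀ i j, Commute (T i) (T j))
include hskew hcomm

theorem exists_forall_apply_apply_eq_smul {i₀ : ι} (h₀ : T i₀ ≠ 0) :
    ∃ x : V, ‖x‖ = 1 ∧ T i₀ x ≠ 0 ∧ ∃ χ : ι → ι → ℝ, ∀ i j, T i (T j x) = χ i j • x := by
  let P : ι × ι → Module.End ℝ V := fun p => T p.1 * T p.2
  have hP : ⨆ χ : ι × ι → ℝ, ⨅ p, Module.End.eigenspace (P p) (χ p) = ⊤ :=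
    LinearMap.IsSymmetric.iSup_iInf_eq_top_of_commute
      (fun p => (hskew p.1).isSymmetric_mul (hskew p.2) (hcomm p.1 p.2))
      (fun p q _ => ((hcomm p.1 q.1).mul_left (hcomm p.2 q.1)).mul_right
        ((hcomm p.1 q.2).mul_left (hcomm p.2 q.2)))
  obtain ⟨χ, hχ⟩ :
      ∃ χ : ι × ι → ℝ, ¬ ⨅ p, Module.End.eigenspace (P p) (χ p) ≤ LinearMap.ker (T i₀) := by
    by_contra! h
    exact h₀ (LinearMap.ker_eq_top.mp (top_le_iff.mp (hP ▸ iSup_le h)))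
  obtain ⟨x, hx, hx₀⟩ := SetLike.not_le_iff_exists.mp hχ
  have hx0 : x ≠ 0 := by rintro rfl; exact hx₀ (zero_mem _)
  refine ⟨‖x‖⁻¹ • x, by simp [norm_smul, hx0], by simpa [hx0] using hx₀, fun i j => χ (i, j),
    fun i j => ?_⟩
  rw [map_smul, map_smul, smul_comm]
  exact congrArg _ (Module.End.mem_eigenspace_iff.mp (mem_iInf _ |>.mp hx (i, j)))

theorem exists_orthonormal_isRotationPair (hV : 2 ≤ finrank ℝ V) :
    ∃ e f : V, Orthonormal ℝ ![e, f] ∧ IsRotationPair T e f := by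
  by_cases hzero : ∀ i, T i = 0
  · let v := stdOrthonormalBasis ℝ V ∘ Fin.castLE hV
    have hv : ![v 0, v 1] = v := by ext k; fin_cases k <;> rfl
    refine ⟨v 0, v 1, ?_, fun i => ⟨0, by simp [hzero]⟩⟩
    rw [hv]
    exact (stdOrthonormalBasis ℝ V).orthonormal.comp _ (Fin.castLE_injective hV)
  · push Not at hzero
    obtain ⟨i₀, h₀⟩ := hzero
    obtain ⟨x, hx, hx₀, χ, hχ⟩ := exists_forall_apply_apply_eq_smul hskew hcomm h₀
    exact ⟨x, exists_orthonormal_isRotationPair_of_apply_apply_eq_smul hskew hcomm hx hχ hx₀⟩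

end Decomposition

theorem exists_orthonormalBasis_isRotationPair {V ι : Type*} [NormedAddCommGroup V]
    [InnerProductSpace ℝ V] [FiniteDimensional ℝ V] {m : ℕ} (hdim : finrank ℝ V = 2 * m)
    {T : ι → V →ₗ[ℝ] V} (hskew : ∀ i, (T i).IsSkewSymmetric)
    (hcomm : ∀ i j, Commute (T i) (T j)) :
    ∃ b : OrthonormalBasis (Fin m × Fin 2) ℝ V, ∀ j, IsRotationPair T (b (j, 0)) (b (j, 1)) := by
  induction m generalizing V with
  | zero =>
    exact ⟨(stdOrthonormalBasis ℝ V).reindex (Fintype.equivOfCardEq (by simp [hdim])),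
      fun j => j.elim0⟩
  | succ m ih =>
    obtain ⟨e, f, hef, hrot⟩ := exists_orthonormal_isRotationPair hskew hcomm (by omega)
    set W := span ℝ (range ![e, f])
    have hW : ∀ i, MapsTo (T i) Wᗮ Wᗮ := fun i => (hskew i).mapsTo_orthogonal (hrot.mapsTo_span i)
    have hWdim : finrank ℝ Wᗮ = 2 * m := by
      have := W.finrank_add_finrank_orthogonal
      rw [finrank_span_eq_card hef.linearIndependent, Fintype.card_fin] at this
      omega
    obtain ⟨c, hc⟩ := ih hWdim (fun i => (hskew i).restrict (hW i))
      (fun i j => LinearMap.restrict_commute (hcomm i j) (hW i) (hW j))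
    have hv : Orthonormal ℝ (Function.uncurry
        (Fin.cons ![e, f] fun j k => (c (j, k) : V) : Fin (m + 1) → Fin 2 → V)) :=
      hef.uncurry_cons (c.orthonormal.comp_linearIsometry Wᗮ.subtypeₗᵢ)
        fun k j l => inner_right_of_mem_orthogonal (subset_span (mem_range_self k)) (c (j, l)).2
    refine ⟨OrthonormalBasis.mk hv (hv.linearIndependent.span_eq_top_of_card_eq_finrank'
      (by simp [hdim, mul_comm])).ge, fun j => ?_⟩
    cases j using Fin.cases
    · simpa using hrot
    · simpa using (hc _).of_restrict

/-- A commuting family of skew-symmetric endomorphisms of a `2m`-dimensional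
real inner product space can be simultaneously put into block-diagonal form with `2×2`
blocks `((0, −λ_j(T)), (λ_j(T), 0))` with respect to a common orthonormal basis. -/
theorem stmt_15 {V : Type*} [NormedAddCommGroup V] [InnerProductSpace ℝ V]
    [FiniteDimensional ℝ V] {m : ℕ} (hdim : Module.finrank ℝ V = 2 * m)
    (A : Set (V →ₗ[ℝ] V))
    (hskew : ∀ T ∈ A, ∀ u v : V, ⟪T u, v⟫ = -⟪u, T v⟫)
    (hcomm : ∀ T ∈ A, ∀ T' ∈ A, T ∘ₗ T' = T' ∘ₗ T) :
    ∃ (b : OrthonormalBasis (Fin (2 * m)) ℝ V) (lam : (V →ₗ[ℝ] V) → Fin m → ℝ),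
      ∀ T ∈ A, ∀ j : Fin m,
        T (b ⟨2 * (j : ℕ), by omega⟩) = lam T j • b ⟨2 * (j : ℕ) + 1, by omega⟩ ∧
        T (b ⟨2 * (j : ℕ) + 1, by omega⟩) = -(lam T j • b ⟨2 * (j : ℕ), by omega⟩) := by
  classical
  obtain ⟨b, hb⟩ := exists_orthonormalBasis_isRotationPair (T := ((↑) : A → V →ₗ[ℝ] V)) hdim
    (fun T => hskew T T.2) (fun T T' => hcomm T T.2 T' T'.2)
  choose lam hlam using hb
  let σ : Fin m × Fin 2 ≃ Fin (2 * m) := finProdFinEquiv.trans (finCongr (mul_comm m 2))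
  refine ⟨b.reindex σ, fun T j => if hT : T ∈ A then lam j ⟨T, hT⟩ else 0, fun T hT j => ?_⟩
  have h0 : (⟨2 * j, by omega⟩ : Fin (2 * m)) = σ (j, 0) := Fin.ext (by simp [σ])
  have h1 : (⟨2 * j + 1, by omega⟩ : Fin (2 * m)) = σ (j, 1) := Fin.ext (by simp [σ]; ring)
  simp only [h0, h1, OrthonormalBasis.reindex_apply, Equiv.symm_apply_apply, dif_pos hT]
  exact hlam j ⟨T, hT⟩
end

section
/- Let g be a flat Lie algebra with orthogonal decomposition g = s ⊕ z ⊕ d where d = [g,g] is abelian of dimension 2m, z is the center, s is abelian, with structure constants [s_i, d_{2j−1}] = λ_{ij} d_{2j}, [s_i, d_{2j}] = −λ_{ij} d_{2j−1}. If ξ(x) = ad_x r is a coboundary (r ∈ Λ²g) satisfying the metaflatness condition ad_{s_ℓ}² ξ(s_k) = 0 for all k, ℓ, and g is nondegenerate (for all i ≠ j in {1,...,m} there exists k with λ_{ki}² ≠ λ_{kj}²), then ξ(s_k) = 0 for all k. -/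
/-!
For the Euclidean form of the basis `b`, `ad (s k)` acts by rotations in the planes
`⟨p j, q j⟩` and kills `s` and `z`, so it is skew-adjoint; hence so is its derivation
extension to `L ⊗ L` for the Euclidean form of `b ⊗ b`. For a skew-adjoint `T` and a positive
definite form, `T² u = 0` gives `‖T u‖² = -⟪u, T² u⟫ = 0`, so `T³ u = 0` forces `T u = 0`.
Lift the bivector `r` to a tensor `t`; the metaflatness condition with `ℓ = k` says that
`ad (s k)³` kills `r`, hence kills the antisymmetrization `u = t - τ t`, so `ad (s k)` kills
`u`, and projecting back to the exterior algebra gives `2 ξ(s k) = 0`.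
-/

open ExteriorAlgebra
open scoped TensorProduct

namespace Module.Basis

variable {R M N ι κ J : Type*} [CommRing R] [AddCommGroup M] [Module R M] [AddCommGroup N]
  [Module R N]

theorem toDual_apply_eq_sum [Fintype ι] [DecidableEq ι] (b : Basis ι R M) (x y : M) :
    b.toDual x y = ∑ i, b.repr x i * b.repr y i := by
  calc b.toDual x y = b.toDual x (∑ i, b.repr y i • b i) := by rw [b.sum_repr]
    _ = _ := by simp only [map_sum, map_smul, toDual_apply_left, smul_eq_mul, mul_comm]

theorem eq_zero_of_toDual_self_eq_zero [Fintype ι] [DecidableEq ι] [LinearOrder R]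
    [IsStrictOrderedRing R] (b : Basis ι R M) {x : M} (h : b.toDual x x = 0) : x = 0 := by
  rw [toDual_apply_eq_sum, Finset.sum_eq_zero_iff_of_nonneg fun i _ => mul_self_nonneg _] at h
  exact b.repr.map_eq_zero_iff.mp <|
    Finsupp.ext fun i => mul_self_eq_zero.mp (h i (Finset.mem_univ i))

theorem toDual_tensorProduct [DecidableEq ι] [DecidableEq κ] (b : Basis ι R M)
    (c : Basis κ R N) :
    (b.tensorProduct c).toDual = LinearMap.BilinForm.tmul b.toDual c.toDual := by
  refine (b.tensorProduct c).ext fun ij => (b.tensorProduct c).ext fun ij' => ?_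
  rw [toDual_apply, tensorProduct_apply', tensorProduct_apply']
  simp [toDual_apply, Prod.ext_iff, ite_and]

theorem isSkewAdjoint_iff (b : Basis ι R M) (B : LinearMap.BilinForm R M) (f : M →ₗ[R] M) :
    B.IsSkewAdjoint f ↔ ∀ i j, B (f (b i)) (b j) = -B (b i) (f (b j)) := by
  refine ⟨fun h i j => by simpa using h (b i) (b j), fun h x y => ?_⟩
  have : B ∘ₗ f = -B.compl₂ f := b.ext fun i => b.ext fun j => by simpa using h i j
  simpa using LinearMap.congr_fun₂ this x y

theorem isSkewAdjoint_toDual_of_rotation [DecidableEq ι] [DecidableEq κ] [DecidableEq J]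
    (b : Basis (ι ⊕ κ ⊕ J ⊕ J) R M) (f : M →ₗ[R] M) (c : J → R)
    (h₁ : ∀ i, f (b (.inl i)) = 0) (h₂ : ∀ i, f (b (.inr (.inl i))) = 0)
    (h₃ : ∀ j, f (b (.inr (.inr (.inl j)))) = c j • b (.inr (.inr (.inr j))))
    (h₄ : ∀ j, f (b (.inr (.inr (.inr j)))) = -(c j • b (.inr (.inr (.inl j))))) :
    b.toDual.IsSkewAdjoint f := by
  rw [b.isSkewAdjoint_iff]
  rintro (i | i | j | j) (i' | i' | j' | j') <;> simp [h₁, h₂, h₃, h₄, toDual_apply]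
  all_goals split_ifs with h <;> simp [h]

end Module.Basis

section LieModule

variable {R L M N : Type*} [CommRing R] [LieRing L] [LieAlgebra R L]
  [AddCommGroup M] [Module R M] [LieRingModule L M] [LieModule R L M]
  [AddCommGroup N] [Module R N] [LieRingModule L N] [LieModule R L N]

theorem LinearMap.IsSkewAdjoint.apply_eq_zero_of_apply_apply_eq_zero
    {B : LinearMap.BilinForm R M} {f : M → M} (hf : B.IsSkewAdjoint f)
    (hB : ∀ x, B x x = 0 → x = 0) {x : M} (h : f (f x) = 0) : f x = 0 :=
  hB _ <| by rw [hf, Pi.neg_apply, h, neg_zero, map_zero]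

theorem LinearMap.IsSkewAdjoint.tmul_lie (x : L) {B₁ : LinearMap.BilinForm R M}
    {B₂ : LinearMap.BilinForm R N} (h₁ : B₁.IsSkewAdjoint (⁅x, ·⁆))
    (h₂ : B₂.IsSkewAdjoint (⁅x, ·⁆)) :
    (B₁.tmul B₂).IsSkewAdjoint (⁅x, ·⁆ : M ⊗[R] N → M ⊗[R] N) := by
  have h₁' (m m' : M) : B₁ ⁅x, m⁆ m' = -B₁ m ⁅x, m'⁆ := by simpa using h₁ m m'
  have h₂' (n n' : N) : B₂ ⁅x, n⁆ n' = -B₂ n ⁅x, n'⁆ := by simpa using h₂ n n'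
  have : B₁.tmul B₂ ∘ₗ LieModule.toEnd R L (M ⊗[R] N) x
      = -(B₁.tmul B₂).compl₂ (LieModule.toEnd R L (M ⊗[R] N) x) := by
    refine TensorProduct.ext' fun m n => TensorProduct.ext' fun m' n' => ?_
    simp only [LinearMap.comp_apply, LinearMap.neg_apply, LinearMap.compl₂_apply,
      LieModule.toEnd_apply_apply, TensorProduct.LieModule.lie_tmul_right, map_add,
      LinearMap.add_apply, LinearMap.BilinForm.tensorDistrib_tmul, smul_eq_mul, h₁', h₂']
    ring
  intro w w'
  simpa using LinearMap.congr_fun₂ this w w'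

theorem TensorProduct.comm_lie (x : L) (w : M ⊗[R] N) :
    TensorProduct.comm R M N ⁅x, w⁆ = ⁅x, TensorProduct.comm R M N w⁆ := by
  have : (TensorProduct.comm R M N).toLinearMap ∘ₗ LieModule.toEnd R L (M ⊗[R] N) x
      = LieModule.toEnd R L (N ⊗[R] M) x ∘ₗ (TensorProduct.comm R M N).toLinearMap :=
    TensorProduct.ext' fun m n => by simp [add_comm]
  exact LinearMap.congr_fun this w

end LieModule

namespace LinearMap

variable {R M N : Type*} [CommRing R] [AddCommGroup M] [Module R M] [AddCommGroup N] [Module R N]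

def alternatingFinTwo (F : M →ₗ[R] M →ₗ[R] N) (hF : ∀ x, F x x = 0) :
    M [⋀^Fin 2]→ₗ[R] N where
  toFun v := F (v 0) (v 1)
  map_update_add' v i x y := by fin_cases i <;> simp
  map_update_smul' v i c x := by fin_cases i <;> simp
  map_eq_zero_of_eq' v i j hv hij := by fin_cases i <;> fin_cases j <;> simp_all

end LinearMap

namespace ExteriorAlgebra

section CommRing

variable {R L M : Type*} [CommRing R] [AddCommGroup M] [Module R M]

variable (R M) in
def wedge : M ⊗[R] M →ₗ[R] ExteriorAlgebra R M :=
  TensorProduct.lift ((LinearMap.mul R _).compl₁₂ (ι R) (ι R))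

@[simp]
theorem wedge_tmul (x y : M) : wedge R M (x ⊗ₜ y) = ι R x * ι R y := rfl

theorem wedge_comm (w : M ⊗[R] M) :
    wedge R M (TensorProduct.comm R M M w) = -wedge R M w := by
  have : wedge R M ∘ₗ (TensorProduct.comm R M M).toLinearMap = -wedge R M :=
    TensorProduct.ext' fun x y => eq_neg_of_add_eq_zero_left (ι_add_mul_swap y x)
  exact LinearMap.congr_fun this w

variable (R M) in
def antisymmetrize : ExteriorAlgebra R M →ₗ[R] M ⊗[R] M :=
  liftAlternating <| Pi.single 2 <|
    (TensorProduct.mk R M M - (TensorProduct.mk R M M).flip).alternatingFinTwo fun _ => by simp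

theorem antisymmetrize_ι_mul_ι (x y : M) :
    antisymmetrize R M (ι R x * ι R y) = x ⊗ₜ y - y ⊗ₜ x := by
  rw [antisymmetrize, liftAlternating_ι_mul, liftAlternating_ι]
  rfl

theorem antisymmetrize_wedge (w : M ⊗[R] M) :
    antisymmetrize R M (wedge R M w) = w - TensorProduct.comm R M M w := by
  have : antisymmetrize R M ∘ₗ wedge R M
      = LinearMap.id - (TensorProduct.comm R M M).toLinearMap :=
    TensorProduct.ext' antisymmetrize_ι_mul_ι
  exact LinearMap.congr_fun this w

variable [LieRing L] [LieAlgebra R L] [LieRingModule L M] [LieModule R L M]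

theorem apply_wedge {x : L} {D : ExteriorAlgebra R M →ₗ[R] ExteriorAlgebra R M}
    (hD : ∀ u v, D (ι R u * ι R v) = ι R ⁅x, u⁆ * ι R v + ι R u * ι R ⁅x, v⁆)
    (w : M ⊗[R] M) : D (wedge R M w) = wedge R M ⁅x, w⁆ := by
  have : D ∘ₗ wedge R M = wedge R M ∘ₗ LieModule.toEnd R L (M ⊗[R] M) x :=
    TensorProduct.ext' fun u v => by simp [hD]
  exact LinearMap.congr_fun this w

end CommRing

variable {K L M I : Type*} [Field K] [LinearOrder K] [IsStrictOrderedRing K]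
  [LieRing L] [LieAlgebra K L] [AddCommGroup M] [Module K M] [LieRingModule L M]
  [LieModule K L M] [Fintype I] [DecidableEq I]

theorem apply_eq_zero_of_apply_apply_apply_eq_zero (b : Module.Basis I K M) {x : L}
    (hx : b.toDual.IsSkewAdjoint (⁅x, ·⁆))
    {D : ExteriorAlgebra K M →ₗ[K] ExteriorAlgebra K M}
    (hD : ∀ u v, D (ι K u * ι K v) = ι K ⁅x, u⁆ * ι K v + ι K u * ι K ⁅x, v⁆)
    {r : ExteriorAlgebra K M} (hr : r ∈ Submodule.span K {w | ∃ u v : M, w = ι K u * ι K v})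
    (h : D (D (D r)) = 0) : D r = 0 := by
  obtain ⟨t, rfl⟩ : r ∈ LinearMap.range (wedge K M) :=
    Submodule.span_le.mpr (by rintro _ ⟨u, v, rfl⟩; exact ⟨u ⊗ₜ v, rfl⟩) hr
  have hB : (b.tensorProduct b).toDual.IsSkewAdjoint (⁅x, ·⁆ : M ⊗[K] M → M ⊗[K] M) := by
    rw [b.toDual_tensorProduct b]
    exact hx.tmul_lie x hx
  have hB₀ (w : M ⊗[K] M) (hw : (b.tensorProduct b).toDual w w = 0) : w = 0 :=
    (b.tensorProduct b).eq_zero_of_toDual_self_eq_zero hw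
  set u := t - TensorProduct.comm K M M t
  have hu₃ : ⁅x, ⁅x, ⁅x, u⁆⁆⁆ = 0 := by
    simpa [apply_wedge hD, antisymmetrize_wedge, u, TensorProduct.comm_lie] using
      congrArg (antisymmetrize K M) h
  have hu₁ : ⁅x, u⁆ = 0 :=
    hB.apply_eq_zero_of_apply_apply_eq_zero hB₀ <|
      hB.apply_eq_zero_of_apply_apply_eq_zero hB₀ hu₃
  have : (2 : K) • D (wedge K M t) = 0 := by
    simpa [apply_wedge hD, u, ← TensorProduct.comm_lie, wedge_comm, two_smul] using
      congrArg (wedge K M) hu₁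
  exact (smul_eq_zero.mp this).resolve_left two_ne_zero

end ExteriorAlgebra

theorem stmt_16_general {L : Type*} [LieRing L] [LieAlgebra ℝ L] {k0 l0 m : ℕ}
    (s : Fin k0 → L) (z : Fin l0 → L) (p q : Fin m → L)
    (lam : Fin k0 → Fin m → ℝ)
    (b : Module.Basis (Fin k0 ⊕ Fin l0 ⊕ Fin m ⊕ Fin m) ℝ L)
    (hbs : ∀ i, b (Sum.inl i) = s i)
    (hbz : ∀ i, b (Sum.inr (Sum.inl i)) = z i)
    (hbp : ∀ i, b (Sum.inr (Sum.inr (Sum.inl i))) = p i)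
    (hbq : ∀ i, b (Sum.inr (Sum.inr (Sum.inr i))) = q i)
    (hss : ∀ i j, ⁅s i, s j⁆ = (0 : L))
    (hz : ∀ i, ∀ y : L, ⁅z i, y⁆ = 0)
    (hsp : ∀ i j, ⁅s i, p j⁆ = lam i j • q j)
    (hsq : ∀ i j, ⁅s i, q j⁆ = -(lam i j • p j))
    -- the derivation extension of `ad` to bivectors
    (A : L →ₗ[ℝ] ExteriorAlgebra ℝ L →ₗ[ℝ] ExteriorAlgebra ℝ L)
    (hA : ∀ x u v : L, A x (ι ℝ u * ι ℝ v) = ι ℝ ⁅x, u⁆ * ι ℝ v + ι ℝ u * ι ℝ ⁅x, v⁆)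
    (r : ExteriorAlgebra ℝ L)
    (hr : r ∈ Submodule.span ℝ
      {w : ExteriorAlgebra ℝ L | ∃ x y : L, w = ι ℝ x * ι ℝ y})
    -- metaflatness: `ad_{s_ℓ}² ξ(s_k) = 0`
    (hmeta : ∀ k l : Fin k0, A (s l) (A (s l) (A (s k) r)) = 0) :
    ∀ k : Fin k0, A (s k) r = 0 := by
  intro k
  have hrot : b.toDual.IsSkewAdjoint (LieAlgebra.ad ℝ L (s k)) :=
    b.isSkewAdjoint_toDual_of_rotation _ (lam k) (fun i => by simp [hbs, hss])
      (fun i => by rw [LieAlgebra.ad_apply, hbz, ← lie_skew, hz, neg_zero])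
      (fun j => by simp [hbp, hbq, hsp]) (fun j => by simp [hbp, hbq, hsq])
  exact ExteriorAlgebra.apply_eq_zero_of_apply_apply_apply_eq_zero b hrot (hA (s k)) hr
    (hmeta k k)

/-- Let `g = span{s_i} ⊕ span{z_i} ⊕ span{d_1,…,d_{2m}}` be a flat Lie
algebra with `d = [g,g]` abelian, `z` central, `s` abelian, and structure constants
`[s_i, d_{2j−1}] = λ_{ij} d_{2j}`, `[s_i, d_{2j}] = −λ_{ij} d_{2j−1}` (here
`p j = d_{2j−1}`, `q j = d_{2j}`). If `ξ(x) = ad_x r` is a coboundary (`r ∈ Λ²g`)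
satisfying the metaflatness condition `ad_{s_ℓ}² ξ(s_k) = 0` for all `k, ℓ`, and `g` is
nondegenerate, then `ξ(s_k) = 0` for all `k`. -/
theorem stmt_16 {L : Type*} [LieRing L] [LieAlgebra ℝ L] {k0 l0 m : ℕ}
    (s : Fin k0 → L) (z : Fin l0 → L) (p q : Fin m → L)
    (lam : Fin k0 → Fin m → ℝ)
    (b : Module.Basis (Fin k0 ⊕ Fin l0 ⊕ Fin m ⊕ Fin m) ℝ L)
    (hbs : ∀ i, b (Sum.inl i) = s i)
    (hbz : ∀ i, b (Sum.inr (Sum.inl i)) = z i)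
    (hbp : ∀ i, b (Sum.inr (Sum.inr (Sum.inl i))) = p i)
    (hbq : ∀ i, b (Sum.inr (Sum.inr (Sum.inr i))) = q i)
    (hss : ∀ i j, ⁅s i, s j⁆ = (0 : L))
    (hz : ∀ i, ∀ y : L, ⁅z i, y⁆ = 0)
    (hsp : ∀ i j, ⁅s i, p j⁆ = lam i j • q j)
    (hsq : ∀ i j, ⁅s i, q j⁆ = -(lam i j • p j))
    (hpp : ∀ i j, ⁅p i, p j⁆ = (0 : L))
    (hpq : ∀ i j, ⁅p i, q j⁆ = (0 : L))
    (hqq : ∀ i j, ⁅q i, q j⁆ = (0 : L))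
    -- the derivation extension of `ad` to bivectors
    (A : L →ₗ[ℝ] ExteriorAlgebra ℝ L →ₗ[ℝ] ExteriorAlgebra ℝ L)
    (hA : ∀ x u v : L, A x (ι ℝ u * ι ℝ v) = ι ℝ ⁅x, u⁆ * ι ℝ v + ι ℝ u * ι ℝ ⁅x, v⁆)
    (r : ExteriorAlgebra ℝ L)
    (hr : r ∈ Submodule.span ℝ
      {w : ExteriorAlgebra ℝ L | ∃ x y : L, w = ι ℝ x * ι ℝ y})
    -- metaflatness: `ad_{s_ℓ}² ξ(s_k) = 0`
    (hmeta : ∀ k l : Fin k0, A (s l) (A (s l) (A (s k) r)) = 0)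
    -- nondegeneracy
    (hnd : ∀ i j : Fin m, i ≠ j → ∃ k : Fin k0, (lam k i) ^ 2 ≠ (lam k j) ^ 2) :
    ∀ k : Fin k0, A (s k) r = 0 :=
  stmt_16_general s z p q lam b hbs hbz hbp hbq hss hz hsp hsq A hA r hr hmeta
end

section
/- Let g be a Lie algebra, d ⊆ g an abelian ideal, and s ⊆ g an abelian subalgebra with g = s ⊕ d (as vector spaces). If r = r_s + r_d with r_s ∈ Λ²s and r_d ∈ Λ²d, and ad_x r_d = 0 for all x ∈ s, then [r,r] = 0, i.e., r satisfies the classical Yang-Baxter equation. -/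
open ExteriorAlgebra

/-- Let `g = s ⊕ d` (as vector spaces) with `d` an abelian ideal and `s` an
abelian subalgebra. If `r = r_s + r_d` with `r_s ∈ Λ²s`, `r_d ∈ Λ²d`, and `ad_x r_d = 0`
for all `x ∈ s`, then `[r,r] = 0`, i.e. `r` satisfies the classical Yang–Baxter
equation. -/
theorem stmt_18 {L : Type*} [LieRing L] [LieAlgebra ℝ L]
    (d : LieIdeal ℝ L) (hdab : ∀ u ∈ d, ∀ v ∈ d, ⁅u, v⁆ = (0 : L))
    (s : LieSubalgebra ℝ L) (hsab : ∀ x ∈ s, ∀ y ∈ s, ⁅x, y⁆ = (0 : L))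
    (hdec : s.toSubmodule ⊔ LieSubmodule.toSubmodule d = ⊤)
    (hdisj : Disjoint s.toSubmodule (LieSubmodule.toSubmodule d))
    -- the algebraic Schouten bracket on bivectors
    (S : ExteriorAlgebra ℝ L →ₗ[ℝ] ExteriorAlgebra ℝ L →ₗ[ℝ] ExteriorAlgebra ℝ L)
    (hS : ∀ x1 x2 y1 y2 : L, S (ι ℝ x1 * ι ℝ x2) (ι ℝ y1 * ι ℝ y2) =
      ι ℝ ⁅x1, y1⁆ * ι ℝ x2 * ι ℝ y2 - ι ℝ ⁅x1, y2⁆ * ι ℝ x2 * ι ℝ y1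
        - ι ℝ ⁅x2, y1⁆ * ι ℝ x1 * ι ℝ y2 + ι ℝ ⁅x2, y2⁆ * ι ℝ x1 * ι ℝ y1)
    (hSsymm : ∀ u v : ExteriorAlgebra ℝ L, S u v = S v u)
    -- the derivation extension of `ad` to bivectors
    (A : L →ₗ[ℝ] ExteriorAlgebra ℝ L →ₗ[ℝ] ExteriorAlgebra ℝ L)
    (hA : ∀ x u v : L, A x (ι ℝ u * ι ℝ v) = ι ℝ ⁅x, u⁆ * ι ℝ v + ι ℝ u * ι ℝ ⁅x, v⁆)
    (rs rd r : ExteriorAlgebra ℝ L)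
    (hrs : rs ∈ Submodule.span ℝ
      {w : ExteriorAlgebra ℝ L | ∃ x ∈ s, ∃ y ∈ s, w = ι ℝ x * ι ℝ y})
    (hrd : rd ∈ Submodule.span ℝ
      {w : ExteriorAlgebra ℝ L | ∃ x ∈ d, ∃ y ∈ d, w = ι ℝ x * ι ℝ y})
    (hr : r = rs + rd)
    (had : ∀ x ∈ s, A x rd = 0) :
    S r r = 0 := by

  -- anticommutation
  have anti : ∀ a b : L, ι ℝ a * ι ℝ b = -(ι ℝ b * ι ℝ a) := fun a b =>
    eq_neg_of_add_eq_zero_left (ι_add_mul_swap a b)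
  -- S vanishes on pairs of bivectors from an abelian set
  have habel : ∀ (t : Set L) (_ : ∀ x ∈ t, ∀ y ∈ t, ⁅x, y⁆ = (0 : L))
      (u v : ExteriorAlgebra ℝ L),
      u ∈ Submodule.span ℝ {w : ExteriorAlgebra ℝ L | ∃ x ∈ t, ∃ y ∈ t, w = ι ℝ x * ι ℝ y} →
      v ∈ Submodule.span ℝ {w : ExteriorAlgebra ℝ L | ∃ x ∈ t, ∃ y ∈ t, w = ι ℝ x * ι ℝ y} →
      S u v = 0 := by
    intro t ht u v hu hv
    induction hu using Submodule.span_induction with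
    | mem w hw =>
      obtain ⟨x1, hx1, x2, hx2, rfl⟩ := hw
      induction hv using Submodule.span_induction with
      | mem w' hw' =>
        obtain ⟨y1, hy1, y2, hy2, rfl⟩ := hw'
        rw [hS, ht x1 hx1 y1 hy1, ht x1 hx1 y2 hy2, ht x2 hx2 y1 hy1, ht x2 hx2 y2 hy2]
        simp
      | zero => simp
      | add a b _ _ ha hb => rw [map_add, ha, hb, add_zero]
      | smul c a _ ha => rw [map_smul, ha, smul_zero]
    | zero => simp
    | add a b _ _ ha hb => rw [map_add, LinearMap.add_apply, ha, hb, add_zero]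
    | smul c a _ ha => rw [map_smul, LinearMap.smul_apply, ha, smul_zero]
  -- cross term formula
  have hcross : ∀ x1 x2 : L, ∀ w ∈ Submodule.span ℝ
      {w : ExteriorAlgebra ℝ L | ∃ x ∈ d, ∃ y ∈ d, w = ι ℝ x * ι ℝ y},
      S (ι ℝ x1 * ι ℝ x2) w = -(ι ℝ x2 * A x1 w) + ι ℝ x1 * A x2 w := by
    intro x1 x2 w hw
    induction hw using Submodule.span_induction with
    | mem w hw =>
      obtain ⟨y1, _, y2, _, rfl⟩ := hw
      rw [hS, hA, hA]
      rw [anti ⁅x1, y1⁆ x2, anti ⁅x1, y2⁆ x2, anti ⁅x2, y1⁆ x1, anti ⁅x2, y2⁆ x1,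
        anti y1 ⁅x1, y2⁆, anti y1 ⁅x2, y2⁆]
      noncomm_ring
    | zero => simp
    | add a b _ _ ha hb => rw [map_add, map_add, map_add, ha, hb]; noncomm_ring
    | smul c a _ ha =>
      rw [map_smul, map_smul, map_smul, ha, smul_add, mul_smul_comm, mul_smul_comm, smul_neg]
  have hcross0 : ∀ u ∈ Submodule.span ℝ
      {w : ExteriorAlgebra ℝ L | ∃ x ∈ s, ∃ y ∈ s, w = ι ℝ x * ι ℝ y}, S u rd = 0 := by
    intro u hu
    induction hu using Submodule.span_induction with
    | mem w hw =>
      obtain ⟨x1, hx1, x2, hx2, rfl⟩ := hw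
      rw [hcross x1 x2 rd hrd, had x1 hx1, had x2 hx2]
      simp
    | zero => simp
    | add a b _ _ ha hb => rw [map_add, LinearMap.add_apply, ha, hb, add_zero]
    | smul c a _ ha => rw [map_smul, LinearMap.smul_apply, ha, smul_zero]
  have hss : S rs rs = 0 :=
    habel s (fun x hx y hy => hsab x hx y hy) rs rs hrs hrs
  have hdd : S rd rd = 0 :=
    habel d (fun x hx y hy => hdab x hx y hy) rd rd hrd hrd
  have hsd : S rs rd = 0 := hcross0 rs hrs
  have hds : S rd rs = 0 := by rw [hSsymm]; exact hsd
  simp [hr, map_add, LinearMap.add_apply, hss, hdd, hsd, hds]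
end
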